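/- arXiv:1301.6366 — 5 statements merged into one kernel-verified Lean document; each statement's English description precedes it below -/
import Mathlib

section
/- Let G be a finitely generated group such that every group homomorphism from G to the additive group ℝ is trivial, and suppose G acts on [0,1) by PL homeomorphisms fixing 0 (i.e., via a homomorphism from G to the group of PL homeomorphisms of [0,1), each of which fixes 0). Then there exists a real number a with 0 < a < 1 such that every element of G acts as the identity on [0, a]. -/
/-!
Near `0` every `ρ g` is linear, `x ↦ c g * x`, with `c g > 0` because `ρ g` is an injective
self-map of `[0,1)` fixing `0`. Germs at `0` compose, so `g ↦ log (c g)` is a homomorphism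
`G → ℝ`, hence trivial: every `ρ g` is the identity on a right neighbourhood of `0`. Finitely
many generators share such a neighbourhood `[0, a]`, and then so does all of `G`.
-/

open Set

/-- `f` is piecewise linear on `[0,1)`: there are points `0 = t₀ < t₁ < ⋯ < tₙ < 1`
and reals `aᵢ, bᵢ` such that `f x = aᵢ * x + bᵢ` on each `[tᵢ, tᵢ₊₁]`, and on `[tₙ, 1)`. -/
def IsPLOnIco (f : ℝ → ℝ) : Prop :=
  ∃ (n : ℕ) (t a b : ℕ → ℝ),
    t 0 = 0 ∧ (∀ i < n, t i < t (i + 1)) ∧ t n < 1 ∧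
    (∀ i < n, ∀ x ∈ Icc (t i) (t (i + 1)), f x = a i * x + b i) ∧
    (∀ x ∈ Ico (t n) 1, f x = a n * x + b n)

/-- A PL homeomorphism of `[0,1)`: a homeomorphism of `[0,1)` (a bijection of `[0,1)`
onto itself, continuous with continuous inverse) which is piecewise linear. -/
def IsPLHomeoIco (f : ℝ → ℝ) : Prop :=
  BijOn f (Ico (0:ℝ) 1) (Ico (0:ℝ) 1) ∧ ContinuousOn f (Ico (0:ℝ) 1) ∧
  (∃ g : ℝ → ℝ, InvOn g f (Ico (0:ℝ) 1) (Ico (0:ℝ) 1) ∧ ContinuousOn g (Ico (0:ℝ) 1)) ∧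
  IsPLOnIco f

open Filter Topology

theorem IsPLOnIco.exists_eventuallyEq_mul {f : ℝ → ℝ} (hf : IsPLOnIco f) (h0 : f 0 = 0) :
    ∃ c : ℝ, f =ᶠ[𝓝[≥] 0] (c * ·) := by
  obtain ⟨n, t, a, b, ht0, hlt, -, hpc, hlast⟩ := hf
  have hfirst : ∃ u > 0, ∀ x ∈ Ico 0 u, f x = a 0 * x + b 0 := by
    rcases n.eq_zero_or_pos with rfl | hn
    · exact ⟨1, one_pos, fun x hx => hlast x (ht0 ▸ hx)⟩
    · exact ⟨t 1, ht0 ▸ hlt 0 hn, fun x hx => hpc 0 hn x (ht0 ▸ Ico_subset_Icc_self hx)⟩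
  obtain ⟨u, hu, hfu⟩ := hfirst
  have hb : b 0 = 0 := by simpa [h0] using (hfu 0 ⟨le_rfl, hu⟩).symm
  exact ⟨a 0, eventually_of_mem (Ico_mem_nhdsGE hu) fun x hx => by simp [hfu x hx, hb]⟩

theorem eq_of_mul_eventuallyEq_nhdsGE {a b : ℝ} (h : (a * ·) =ᶠ[𝓝[≥] (0 : ℝ)] (b * ·)) :
    a = b := by
  obtain ⟨x, hab, hx⟩ :=
    ((h.filter_mono (nhdsWithin_mono 0 Ioi_subset_Ici_self)).and eventually_mem_nhdsWithin).exists
  exact mul_right_cancel₀ (ne_of_gt hx) hab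

theorem Filter.EventuallyEq.comp_mul_nhdsGE {f g : ℝ → ℝ} {a b : ℝ}
    (hf : f =ᶠ[𝓝[≥] 0] (a * ·)) (hg : g =ᶠ[𝓝[≥] 0] (b * ·)) (hb : 0 ≤ b) :
    f ∘ g =ᶠ[𝓝[≥] 0] ((a * b) * ·) := by
  have hlin : Tendsto (b * ·) (𝓝[≥] 0) (𝓝[≥] (0 : ℝ)) :=
    tendsto_nhdsWithin_of_tendsto_nhds_of_eventually_within _
      (by simpa using ((continuous_const_mul b).tendsto 0).mono_left nhdsWithin_le_nhds)
      (eventually_mem_nhdsWithin.mono fun x hx => mul_nonneg hb hx)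
  filter_upwards [hf.comp_tendsto (hlin.congr' hg.symm), hg] with x hfx hgx
  simp only [Function.comp_apply] at hfx ⊢
  rw [hfx, hgx, mul_assoc]

theorem pos_of_eventuallyEq_mul {f : ℝ → ℝ} {c : ℝ} (hmaps : MapsTo f (Ico 0 1) (Ico 0 1))
    (hinj : InjOn f (Ico 0 1)) (h0 : f 0 = 0) (hc : f =ᶠ[𝓝[≥] 0] (c * ·)) : 0 < c := by
  obtain ⟨x, hfx, hx⟩ :=
    ((hc.filter_mono (nhdsWithin_mono 0 Ioi_subset_Ici_self)).and (Ioo_mem_nhdsGT one_pos)).exists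
  have hxI : x ∈ Ico (0 : ℝ) 1 := Ioo_subset_Ico_self hx
  have hne : f x ≠ 0 := fun h => hx.1.ne' (hinj hxI ⟨le_rfl, one_pos⟩ (h.trans h0.symm))
  have hcx : 0 < c * x := by
    rw [← show f x = c * x from hfx]
    exact (hmaps hxI).1.lt_of_ne' hne
  exact pos_of_mul_pos_left hcx hx.1.le

theorem eq_one_of_pos_of_map_mul {G : Type*} [Group G]
    (hH1 : ∀ φ : G →* Multiplicative ℝ, ∀ g : G, φ g = 1) {c : G → ℝ} (hpos : ∀ g, 0 < c g)
    (hmul : ∀ g h, c (g * h) = c g * c h) (g : G) : c g = 1 := by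
  let φ : G →* Multiplicative ℝ := MonoidHom.mk' (fun g => .ofAdd (Real.log (c g))) fun g h => by
    rw [hmul, Real.log_mul (hpos g).ne' (hpos h).ne', ofAdd_add]
  exact Real.eq_one_of_pos_of_log_eq_zero (hpos g) (congrArg Multiplicative.toAdd (hH1 φ g))

theorem forall_fixed_of_closure_eq_top {G α : Type*} [Group G] {ρ : G → α → α} {A : Set α}
    (hone : ∀ x ∈ A, ρ 1 x = x) (hmul : ∀ g h : G, ∀ x ∈ A, ρ (g * h) x = ρ g (ρ h x))
    {S : Set G} (hS : Subgroup.closure S = ⊤) (hSA : ∀ s ∈ S, ∀ x ∈ A, ρ s x = x) (g : G) :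
    ∀ x ∈ A, ρ g x = x := by
  induction (hS ▸ Subgroup.mem_top g : g ∈ Subgroup.closure S) using
    Subgroup.closure_induction with
  | mem s hs => exact hSA s hs
  | one => exact hone
  | mul u v _ _ hu hv => intro x hx; rw [hmul u v x hx, hv x hx, hu x hx]
  | inv u _ hu =>
    intro x hx
    calc ρ u⁻¹ x = ρ u⁻¹ (ρ u x) := by rw [hu x hx]
      _ = ρ (u⁻¹ * u) x := (hmul _ _ x hx).symm
      _ = x := by rw [inv_mul_cancel, hone x hx]

/-- PL Reeb–Thurston stability, local form: if a finitely generated group `G` with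
no nontrivial homomorphism to `ℝ` acts on `[0,1)` by PL homeomorphisms fixing `0`
(via a homomorphism to the group of PL homeomorphisms of `[0,1)`), then the action
is trivial on some interval `[0, a]` with `0 < a < 1`. -/
theorem pl_action_on_Ico_trivial_near_zero (G : Type*) [Group G] [Group.FG G]
    (hH1 : ∀ φ : G →* Multiplicative ℝ, ∀ g : G, φ g = 1)
    (ρ : G → ℝ → ℝ)
    (hPL : ∀ g : G, IsPLHomeoIco (ρ g))
    (hfix : ∀ g : G, ρ g 0 = 0)
    (hone : ∀ x ∈ Ico (0:ℝ) 1, ρ 1 x = x)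
    (hmul : ∀ g h : G, ∀ x ∈ Ico (0:ℝ) 1, ρ (g * h) x = ρ g (ρ h x)) :
    ∃ a : ℝ, 0 < a ∧ a < 1 ∧ ∀ g : G, ∀ x ∈ Icc (0:ℝ) a, ρ g x = x := by
  choose c hc using fun g => (hPL g).2.2.2.exists_eventuallyEq_mul (hfix g)
  have hpos : ∀ g, 0 < c g := fun g =>
    pos_of_eventuallyEq_mul (hPL g).1.mapsTo (hPL g).1.injOn (hfix g) (hc g)
  have hcmul : ∀ g h, c (g * h) = c g * c h := fun g h => by
    have hcomp : ρ (g * h) =ᶠ[𝓝[≥] 0] ρ g ∘ ρ h :=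
      eventually_of_mem (Ico_mem_nhdsGE one_pos) (hmul g h)
    exact eq_of_mul_eventuallyEq_nhdsGE
      ((hc _).symm.trans (hcomp.trans ((hc g).comp_mul_nhdsGE (hc h) (hpos h).le)))
  have hgerm : ∀ g, ∀ᶠ x in 𝓝[≥] (0 : ℝ), ρ g x = x := fun g =>
    (hc g).mono fun x hx => by
      rw [hx, eq_one_of_pos_of_map_mul hH1 hpos hcmul g]; exact one_mul x
  obtain ⟨S, hS⟩ := Group.FG.out (G := G)
  have hnear : ∀ᶠ x in 𝓝[≥] (0 : ℝ), x ∈ Ico (0 : ℝ) 1 ∧ ∀ s ∈ S, ρ s x = x :=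
    (eventually_mem_set.2 (Ico_mem_nhdsGE one_pos)).and
      ((eventually_all_finset S).2 fun s _ => hgerm s)
  obtain ⟨a, ha, hsub⟩ := mem_nhdsGE_iff_exists_Icc_subset.1 hnear
  have ha1 : a < 1 := (hsub (right_mem_Icc.2 ha.le)).1.2
  have hIcc : Icc 0 a ⊆ Ico (0 : ℝ) 1 := fun x hx => (hsub hx).1
  exact ⟨a, ha, ha1, forall_fixed_of_closure_eq_top (fun x hx => hone x (hIcc hx))
    (fun g h x hx => hmul g h x (hIcc hx)) hS fun s hs x hx => (hsub hx).2 s hs⟩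
end

section
/- Let G be a finitely generated group such that every group homomorphism from G to the additive group ℝ is trivial. Then any action of G on [0,1) by PL homeomorphisms fixing 0 is trivial; that is, every element of G acts as the identity on all of [0,1). -/
open Set

/-!
The common fixed points of `G` form a closed subset of `[0,1)` containing `0`. At a common fixed
point `c`, piecewise linearity makes each `ρ g` agree, just to the right of `c`, with a dilation
`x ↦ c + a_g (x - c)`; monotonicity gives `a_g > 0`, and `g ↦ a_g` is a homomorphism into the
positive reals, hence trivial. Intersecting over finitely many generators, some right
neighbourhood of `c` is fixed by all of them, hence by `G`; and a closed subset of `[0,1)`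
containing `0` with this property is all of `[0,1)`.
-/

open Filter Topology

theorem Nat.exists_le_lt_succ_of_le_of_lt {α : Type*} [LinearOrder α] {t : ℕ → α} {c : α} :
    ∀ {m : ℕ}, t 0 ≤ c → c < t m → ∃ i < m, t i ≤ c ∧ c < t (i + 1)
  | 0, h0, hm => absurd hm (not_lt.2 h0)
  | m + 1, h0, hm => by
    by_cases hc : t m ≤ c
    · exact ⟨m, m.lt_succ_self, hc, hm⟩
    · obtain ⟨i, hi, hti⟩ := exists_le_lt_succ_of_le_of_lt h0 (not_le.1 hc)
      exact ⟨i, hi.trans m.lt_succ_self, hti⟩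

theorem IsPLOnIco.exists_eventually_affine {f : ℝ → ℝ} (hf : IsPLOnIco f) {c : ℝ}
    (hc : c ∈ Ico (0 : ℝ) 1) : ∃ a b : ℝ, ∀ᶠ x in 𝓝[≥] c, f x = a * x + b := by
  obtain ⟨n, t, a, b, ht0, -, -, hpiece, hlast⟩ := hf
  by_cases hnc : t n ≤ c
  · exact ⟨a n, b n, mem_of_superset (Ico_mem_nhdsGE hc.2)
      fun x hx ↦ hlast x ⟨hnc.trans hx.1, hx.2⟩⟩
  · obtain ⟨i, hi, hic, hci⟩ :=
      Nat.exists_le_lt_succ_of_le_of_lt (ht0 ▸ hc.1) (not_le.1 hnc)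
    exact ⟨a i, b i, mem_of_superset (Icc_mem_nhdsGE hci)
      fun x hx ↦ hpiece i hi x ⟨hic.trans hx.1, hx.2⟩⟩

theorem IsPLHomeoIco.strictMonoOn_Icc {f : ℝ → ℝ} (hf : IsPLHomeoIco f) (h0 : f 0 = 0)
    {b : ℝ} (hb : b ∈ Ico (0 : ℝ) 1) : StrictMonoOn f (Icc 0 b) :=
  have hsub : Icc 0 b ⊆ Ico 0 1 := Icc_subset_Ico_right hb.2
  ContinuousOn.strictMonoOn_of_injOn_Icc hb.1 (h0.symm ▸ (hf.1.mapsTo hb).1)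
    (hf.2.1.mono hsub) (hf.1.injOn.mono hsub)

def IsRightDilationAt (f : ℝ → ℝ) (c a : ℝ) : Prop :=
  f =ᶠ[𝓝[≥] c] fun x ↦ c + a * (x - c)

namespace IsRightDilationAt

variable {f g : ℝ → ℝ} {c a b : ℝ}

theorem id_one : IsRightDilationAt id c 1 :=
  Eventually.of_forall fun x ↦ by simp

theorem congr (hf : IsRightDilationAt f c a) (hfg : g =ᶠ[𝓝[≥] c] f) :
    IsRightDilationAt g c a :=
  hfg.trans hf

theorem unique (ha : IsRightDilationAt f c a) (hb : IsRightDilationAt f c b) : a = b := by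
  obtain ⟨x, hx, hxc⟩ :=
    (((ha.symm.trans hb).filter_mono (nhdsWithin_mono c Ioi_subset_Ici_self)).and
      self_mem_nhdsWithin).exists
  exact mul_right_cancel₀ (sub_ne_zero.2 (ne_of_gt hxc)) (add_left_cancel hx)

theorem comp (hf : IsRightDilationAt f c a) (hg : IsRightDilationAt g c b) (hb : 0 ≤ b) :
    IsRightDilationAt (f ∘ g) c (a * b) := by
  have hg_tendsto : Tendsto g (𝓝[≥] c) (𝓝[≥] c) := by
    refine tendsto_nhdsWithin_iff.2 ⟨?_, ?_⟩
    · refine (Tendsto.congr' hg.symm ?_)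
      have : Continuous fun x : ℝ ↦ c + b * (x - c) := by fun_prop
      simpa using this.continuousWithinAt (s := Ici c) (x := c) |>.tendsto
    · filter_upwards [hg, self_mem_nhdsWithin] with x hx hxc
      rw [hx, mem_Ici]
      nlinarith [mem_Ici.1 hxc]
  filter_upwards [hg_tendsto.eventually hf, hg] with x hfx hgx
  rw [Function.comp_apply, hfx, hgx]
  ring

theorem pos (hf : IsRightDilationAt f c a) {s : Set ℝ} (hmono : StrictMonoOn f s)
    (hs : s ∈ 𝓝[≥] c) : 0 < a := by
  have hcs : c ∈ s := mem_of_mem_nhdsWithin self_mem_Ici hs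
  obtain ⟨x, ⟨hfx, hxs⟩, hxc⟩ :=
    (((hf.and hs).filter_mono (nhdsWithin_mono c Ioi_subset_Ici_self)).and
      self_mem_nhdsWithin).exists
  have hfc : f c = c := by simpa using hf.self_of_nhdsWithin self_mem_Ici
  have := hmono hcs hxs hxc
  rw [hfx, hfc] at this
  nlinarith

theorem eventuallyEq_id (hf : IsRightDilationAt f c 1) : f =ᶠ[𝓝[≥] c] id :=
  hf.trans (Eventually.of_forall fun x ↦ by simp)

end IsRightDilationAt

theorem IsPLHomeoIco.exists_isRightDilationAt {f : ℝ → ℝ} (hf : IsPLHomeoIco f)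
    (h0 : f 0 = 0) {c : ℝ} (hc : c ∈ Ico (0 : ℝ) 1) (hfc : f c = c) :
    ∃ a, 0 < a ∧ IsRightDilationAt f c a := by
  obtain ⟨a, b, hab⟩ := hf.2.2.2.exists_eventually_affine hc
  have hb : b = c - a * c := by
    have := hab.self_of_nhdsWithin self_mem_Ici
    linarith
  have hdil : IsRightDilationAt f c a := hab.mono fun x hx ↦ by rw [hx, hb]; ring
  have hmid : (c + 1) / 2 ∈ Ico (0 : ℝ) 1 := ⟨by linarith [hc.1], by linarith [hc.2]⟩
  refine ⟨a, hdil.pos (hf.strictMonoOn_Icc h0 hmid) ?_, hdil⟩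
  exact mem_of_superset (Icc_mem_nhdsGE (by linarith [hc.2])) (Icc_subset_Icc_left hc.1)

theorem MonoidHom.eq_one_of_pos {G : Type*} [Group G]
    (hH1 : ∀ φ : G →* Multiplicative ℝ, ∀ g : G, φ g = 1) (χ : G →* ℝ) (hχ : ∀ g, 0 < χ g)
    (g : G) : χ g = 1 := by
  let logχ : G →* Multiplicative ℝ :=
    { toFun := fun g ↦ .ofAdd (Real.log (χ g))
      map_one' := by simp
      map_mul' := fun g h ↦ by
        simp only [map_mul, Real.log_mul (hχ g).ne' (hχ h).ne', ofAdd_add] }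
  exact Real.eq_one_of_pos_of_log_eq_zero (hχ g) (ofAdd_eq_one.1 (hH1 logχ g))

theorem apply_eq_self_of_mem_closure {G α : Type*} [Group G] {ρ : G → α → α} {X : Set α}
    (hone : ∀ x ∈ X, ρ 1 x = x) (hmul : ∀ g h : G, ∀ x ∈ X, ρ (g * h) x = ρ g (ρ h x))
    {S : Set G} {y : α} (hy : y ∈ X) (hS : ∀ s ∈ S, ρ s y = y) {g : G}
    (hg : g ∈ Subgroup.closure S) : ρ g y = y := by
  induction hg using Subgroup.closure_induction with
  | mem s hs => exact hS s hs
  | one => exact hone y hy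
  | mul g h _ _ hg hh => rw [hmul g h y hy, hh, hg]
  | inv g _ hg =>
    have := hmul g⁻¹ g y hy
    rwa [inv_mul_cancel, hone y hy, hg, eq_comm] at this

section PLAction

variable {G : Type*} [Group G] {ρ : G → ℝ → ℝ}

theorem eventuallyEq_id_of_forall_apply_eq
    (hH1 : ∀ φ : G →* Multiplicative ℝ, ∀ g : G, φ g = 1)
    (hPL : ∀ g : G, IsPLHomeoIco (ρ g)) (hfix : ∀ g : G, ρ g 0 = 0)
    (hone : ∀ x ∈ Ico (0:ℝ) 1, ρ 1 x = x)
    (hmul : ∀ g h : G, ∀ x ∈ Ico (0:ℝ) 1, ρ (g * h) x = ρ g (ρ h x))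
    {c : ℝ} (hc : c ∈ Ico (0 : ℝ) 1) (hcfix : ∀ g : G, ρ g c = c) (g : G) :
    ρ g =ᶠ[𝓝[≥] c] id := by
  choose ratio ratio_pos hratio using
    fun g ↦ (hPL g).exists_isRightDilationAt (hfix g) hc (hcfix g)
  have hIco : Ico (0 : ℝ) 1 ∈ 𝓝[≥] c :=
    mem_of_superset (Ico_mem_nhdsGE hc.2) (Ico_subset_Ico_left hc.1)
  let χ : G →* ℝ :=
    { toFun := ratio
      map_one' := (hratio 1).unique
        (IsRightDilationAt.id_one.congr (mem_of_superset hIco hone))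
      map_mul' := fun g h ↦ (hratio (g * h)).unique
        (((hratio g).comp (hratio h) (ratio_pos h).le).congr
          (mem_of_superset hIco (hmul g h))) }
  have hχ : ratio g = 1 := MonoidHom.eq_one_of_pos hH1 χ ratio_pos g
  exact (hχ ▸ hratio g).eventuallyEq_id

end PLAction

/-- PL Reeb–Thurston stability on the half-open interval: if a finitely generated
group `G` with no nontrivial homomorphism to `ℝ` acts on `[0,1)` by PL homeomorphisms
fixing `0`, then the action is trivial: every element acts as the identity on `[0,1)`. -/
theorem pl_action_on_Ico_trivial (G : Type*) [Group G] [Group.FG G]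
    (hH1 : ∀ φ : G →* Multiplicative ℝ, ∀ g : G, φ g = 1)
    (ρ : G → ℝ → ℝ)
    (hPL : ∀ g : G, IsPLHomeoIco (ρ g))
    (hfix : ∀ g : G, ρ g 0 = 0)
    (hone : ∀ x ∈ Ico (0:ℝ) 1, ρ 1 x = x)
    (hmul : ∀ g h : G, ∀ x ∈ Ico (0:ℝ) 1, ρ (g * h) x = ρ g (ρ h x)) :
    ∀ g : G, ∀ x ∈ Ico (0:ℝ) 1, ρ g x = x := by
  obtain ⟨S, hSgen, hSfin⟩ := Group.fg_iff.mp ‹Group.FG G›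
  set U := {x : ℝ | ∀ g : G, ρ g x = x}
  have hU_closed : ∀ b < 1, IsClosed (U ∩ Icc 0 b) := fun b hb ↦ by
    have hU : U ∩ Icc 0 b = ⋂ g, {x ∈ Icc 0 b | ρ g x = x} := by
      ext x; simp [U, forall_and, and_comm]
    exact hU ▸ isClosed_iInter fun g ↦ isClosed_Icc.isClosed_eq
      ((hPL g).2.1.mono (Icc_subset_Ico_right hb)) continuousOn_id
  have hU_nhdsGT : ∀ x ∈ U, x ∈ Ico (0:ℝ) 1 → U ∈ 𝓝[>] x := fun x hxU hx ↦ by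
    have hS : ∀ᶠ y in 𝓝[≥] x, ∀ s ∈ S, ρ s y = y := hSfin.eventually_all.2 fun s _ ↦
      eventuallyEq_id_of_forall_apply_eq hH1 hPL hfix hone hmul hx hxU s
    filter_upwards [hS.filter_mono (nhdsWithin_mono x Ioi_subset_Ici_self),
      Ioo_mem_nhdsGT hx.2] with y hyS hy
    exact fun g ↦ apply_eq_self_of_mem_closure hone hmul ⟨hx.1.trans hy.1.le, hy.2⟩ hyS
      (hSgen ▸ Subgroup.mem_top g)
  intro g x hx
  have hIcc : Icc 0 x ⊆ U := (hU_closed x hx.2).Icc_subset_of_forall_mem_nhdsWithin hfix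
    fun y hy ↦ hU_nhdsGT y hy.1 ⟨hy.2.1, hy.2.2.trans hx.2⟩
  exact hIcc ⟨hx.1, le_rfl⟩ g
end

section
/- Let G be a finitely generated group such that every group homomorphism from G to the additive group ℝ is trivial. Then any action of G on [0,1] by PL homeomorphisms fixing both endpoints 0 and 1 is trivial; that is, every element of G acts as the identity on all of [0,1]. -/
/-!
Let `F` be the set of common fixed points of `G`; it is closed, so it suffices to show that each
`s ∈ F ∩ [0, 1)` is followed by a right neighbourhood contained in `F`. Each `ρ g` is increasing,
fixes `s` and is linear on some `[s, s + δ]`; its slope `c g > 0` satisfies the chain rule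
`c (g * h) = c g * c h`, so `log ∘ c` is a homomorphism `G → ℝ`, hence trivial. Thus every
generator is the identity on a right neighbourhood of `s`, and as there are finitely many
generators, one neighbourhood serves them all, hence all of `G`.
-/

open Set Filter Topology

/-- `f` is piecewise linear on `[0,1]`: there are points `0 = t₀ < t₁ < ⋯ < tₙ = 1`
and reals `aᵢ, bᵢ` such that `f x = aᵢ * x + bᵢ` on each `[tᵢ, tᵢ₊₁]`. -/
def IsPLOnIcc (f : ℝ → ℝ) : Prop :=
  ∃ (n : ℕ) (t a b : ℕ → ℝ),
    t 0 = 0 ∧ (∀ i < n, t i < t (i + 1)) ∧ t n = 1 ∧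
    (∀ i < n, ∀ x ∈ Icc (t i) (t (i + 1)), f x = a i * x + b i)

/-- A PL homeomorphism of `[0,1]`: a homeomorphism of `[0,1]` (a bijection of `[0,1]`
onto itself, continuous with continuous inverse) which is piecewise linear. -/
def IsPLHomeoIcc (f : ℝ → ℝ) : Prop :=
  BijOn f (Icc (0:ℝ) 1) (Icc (0:ℝ) 1) ∧ ContinuousOn f (Icc (0:ℝ) 1) ∧
  (∃ g : ℝ → ℝ, InvOn g f (Icc (0:ℝ) 1) (Icc (0:ℝ) 1) ∧ ContinuousOn g (Icc (0:ℝ) 1)) ∧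
  IsPLOnIcc f

def HasRightLinearGerm (f : ℝ → ℝ) (s c : ℝ) : Prop :=
  ∀ᶠ x in 𝓝[≥] s, f x = s + c * (x - s)

namespace HasRightLinearGerm

variable {f g : ℝ → ℝ} {s a b : ℝ}

theorem congr (h : HasRightLinearGerm f s a) (hfg : f =ᶠ[𝓝[≥] s] g) :
    HasRightLinearGerm g s a := by
  filter_upwards [h, hfg] with x hx hfgx
  rw [← hfgx, hx]

theorem of_eventuallyEq_id (h : f =ᶠ[𝓝[≥] s] id) : HasRightLinearGerm f s 1 := by
  filter_upwards [h] with x hx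
  rw [hx, id, one_mul, add_sub_cancel]

theorem slope_unique (ha : HasRightLinearGerm f s a) (hb : HasRightLinearGerm f s b) : a = b := by
  obtain ⟨x, ⟨hxa, hxb⟩, hsx⟩ :=
    (((ha.and hb).filter_mono (nhdsWithin_mono s Ioi_subset_Ici_self)).and
      self_mem_nhdsWithin).exists
  exact mul_right_cancel₀ (sub_pos.2 hsx).ne' (by linarith)

theorem tendsto_nhdsGE (ha : HasRightLinearGerm f s a) (ha0 : 0 ≤ a) :
    Tendsto f (𝓝[≥] s) (𝓝[≥] s) := by
  refine tendsto_nhdsWithin_iff.2 ⟨?_, ?_⟩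
  · have hlin : Tendsto (fun x => s + a * (x - s)) (𝓝[≥] s) (𝓝 s) := by
      have : Continuous fun x => s + a * (x - s) := by fun_prop
      simpa using (this.tendsto s).mono_left nhdsWithin_le_nhds
    exact hlin.congr' (ha.mono fun x hx => hx.symm)
  · filter_upwards [ha, self_mem_nhdsWithin] with x hx hsx
    rw [hx]
    exact le_add_of_nonneg_right (mul_nonneg ha0 (sub_nonneg.2 hsx))

theorem comp (ha : HasRightLinearGerm f s a) (hb : HasRightLinearGerm g s b) (hb0 : 0 ≤ b) :
    HasRightLinearGerm (f ∘ g) s (a * b) := by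
  filter_upwards [(hb.tendsto_nhdsGE hb0).eventually ha, hb] with x hfx hgx
  rw [Function.comp_apply, hfx, hgx]
  ring

theorem pos_of_strictMonoOn {v : ℝ} (ha : HasRightLinearGerm f s a)
    (hf : StrictMonoOn f (Icc s v)) (hsv : s < v) : 0 < a := by
  obtain ⟨x, hxa, hx⟩ :=
    ((ha.filter_mono (nhdsWithin_mono s Ioi_subset_Ici_self)).and (Ioc_mem_nhdsGT hsv)).exists
  have hfs : f s = s + a * (s - s) := ha.self_of_nhdsWithin self_mem_Ici
  have hlt : f s < f x := hf (left_mem_Icc.2 hsv.le) (Ioc_subset_Icc_self hx) hx.1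
  rw [hfs, hxa] at hlt
  exact pos_of_mul_pos_left (by linarith) (sub_nonneg.2 hx.1.le)

end HasRightLinearGerm

theorem IsPLOnIcc.eventually_eq_affine_nhdsGE {f : ℝ → ℝ} (hf : IsPLOnIcc f) {s : ℝ}
    (hs : s ∈ Ico 0 1) : ∃ a b : ℝ, ∀ᶠ x in 𝓝[≥] s, f x = a * x + b := by
  obtain ⟨n, t, a, b, ht0, -, htn, hab⟩ := hf
  set i := Nat.findGreatest (fun i => t i ≤ s) n
  have hti : t i ≤ s := Nat.findGreatest_spec (P := fun i => t i ≤ s) (Nat.zero_le n) (ht0 ▸ hs.1)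
  have hin : i < n := by
    refine (Nat.findGreatest_le n).lt_of_ne fun hi : i = n => ?_
    rw [hi, htn] at hti
    exact hs.2.not_ge hti
  have hst : s < t (i + 1) := not_le.1 (Nat.findGreatest_is_greatest (Nat.lt_succ_self i) hin)
  refine ⟨a i, b i, ?_⟩
  filter_upwards [Ico_mem_nhdsGE hst] with x hx
  exact hab i hin x ⟨hti.trans hx.1, hx.2.le⟩

theorem IsPLOnIcc.exists_hasRightLinearGerm {f : ℝ → ℝ} (hf : IsPLOnIcc f) {s : ℝ}
    (hs : s ∈ Ico 0 1) (hfs : f s = s) : ∃ c, HasRightLinearGerm f s c := by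
  obtain ⟨a, b, h⟩ := hf.eventually_eq_affine_nhdsGE hs
  have hb : b = s - a * s := by
    have := h.self_of_nhdsWithin self_mem_Ici
    linarith
  exact ⟨a, h.mono fun x hx => by rw [hx, hb]; ring⟩

theorem IsPLHomeoIcc.strictMonoOn {f : ℝ → ℝ} (hf : IsPLHomeoIcc f) (h01 : f 0 ≤ f 1) :
    StrictMonoOn f (Icc 0 1) :=
  hf.2.1.strictMonoOn_of_injOn_Icc zero_le_one h01 hf.1.injOn

theorem MonoidHom.eq_one_of_pos_s10 {M : Type*} [Monoid M]
    (hM : ∀ φ : M →* Multiplicative ℝ, ∀ g, φ g = 1) (c : M →* ℝ) (hc : ∀ g, 0 < c g) (g : M) :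
    c g = 1 := by
  let φ : M →* Multiplicative ℝ :=
    { toFun := fun g => .ofAdd (Real.log (c g))
      map_one' := by simp
      map_mul' := fun g h => by
        simp only [map_mul, Real.log_mul (hc g).ne' (hc h).ne', ofAdd_add] }
  exact Real.eq_one_of_pos_of_log_eq_zero (hc g) (congrArg Multiplicative.toAdd (hM φ g))

theorem isClosed_setOf_forall_apply_eq_inter {ι α : Type*} [TopologicalSpace α] [T2Space α]
    {f : ι → α → α} {K : Set α} (hK : IsClosed K) (hf : ∀ i, ContinuousOn (f i) K) :
    IsClosed ({x | ∀ i, f i x = x} ∩ K) := by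
  have hfix : ∀ i, IsClosed (K ∩ (fun x => (f i x, x)) ⁻¹' diagonal α) := fun i =>
    ((hf i).prodMk continuousOn_id).preimage_isClosed_of_isClosed hK isClosed_diagonal
  convert (isClosed_iInter hfix).inter hK using 1
  ext x
  simp only [mem_inter_iff, mem_ofPred_eq, mem_iInter, mem_preimage, mem_diagonal_iff]
  exact ⟨fun h => ⟨fun i => ⟨h.2, h.1 i⟩, h.2⟩, fun h => ⟨fun i => (h.1 i).2, h.2⟩⟩

section Action

variable {G : Type*} [Group G]

theorem apply_eq_of_closure_eq_top {α : Type*} {ρ : G → α → α} {D : Set α}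
    (hone : ∀ x ∈ D, ρ 1 x = x) (hmul : ∀ g h : G, ∀ x ∈ D, ρ (g * h) x = ρ g (ρ h x))
    {S : Set G} (hS : Subgroup.closure S = ⊤) {x : α} (hx : x ∈ D) (hSx : ∀ g ∈ S, ρ g x = x)
    (g : G) : ρ g x = x := by
  have hg : g ∈ Subgroup.closure S := hS ▸ Subgroup.mem_top g
  induction hg using Subgroup.closure_induction with
  | mem g hg => exact hSx g hg
  | one => exact hone x hx
  | mul g h _ _ hg hh => rw [hmul g h x hx, hh, hg]
  | inv g _ hg =>
    calc ρ g⁻¹ x = ρ g⁻¹ (ρ g x) := by rw [hg]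
      _ = x := by rw [← hmul g⁻¹ g x hx, inv_mul_cancel, hone x hx]

variable {ρ : G → ℝ → ℝ} {s : ℝ}

theorem exists_slope_monoidHom (hPL : ∀ g, IsPLOnIcc (ρ g))
    (hmono : ∀ g, StrictMonoOn (ρ g) (Icc 0 1)) (hone : ∀ x ∈ Icc (0 : ℝ) 1, ρ 1 x = x)
    (hmul : ∀ g h : G, ∀ x ∈ Icc (0 : ℝ) 1, ρ (g * h) x = ρ g (ρ h x))
    (hs : s ∈ Ico 0 1) (hfix : ∀ g, ρ g s = s) :
    ∃ c : G →* ℝ, ∀ g, 0 < c g ∧ HasRightLinearGerm (ρ g) s (c g) := by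
  choose c hc using fun g => (hPL g).exists_hasRightLinearGerm hs (hfix g)
  have hc_pos g : 0 < c g :=
    (hc g).pos_of_strictMonoOn ((hmono g).mono (Icc_subset_Icc_left hs.1)) hs.2
  have hIcc : Icc (0 : ℝ) 1 ∈ 𝓝[≥] s :=
    mem_of_superset (Icc_mem_nhdsGE hs.2) (Icc_subset_Icc_left hs.1)
  refine ⟨{ toFun := c, map_one' := ?_, map_mul' := fun g h => ?_ }, fun g => ⟨hc_pos g, hc g⟩⟩
  · exact (hc 1).slope_unique (.of_eventuallyEq_id (eventually_of_mem hIcc hone))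
  · refine (hc (g * h)).slope_unique (((hc g).comp (hc h) (hc_pos h).le).congr ?_)
    filter_upwards [hIcc] with x hx using (hmul g h x hx).symm

theorem eventually_nhdsGT_forall_apply_eq [Group.FG G]
    (hH1 : ∀ φ : G →* Multiplicative ℝ, ∀ g : G, φ g = 1) (hPL : ∀ g, IsPLOnIcc (ρ g))
    (hmono : ∀ g, StrictMonoOn (ρ g) (Icc 0 1)) (hone : ∀ x ∈ Icc (0 : ℝ) 1, ρ 1 x = x)
    (hmul : ∀ g h : G, ∀ x ∈ Icc (0 : ℝ) 1, ρ (g * h) x = ρ g (ρ h x))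
    (hs : s ∈ Ico 0 1) (hfix : ∀ g, ρ g s = s) :
    ∀ᶠ x in 𝓝[>] s, ∀ g, ρ g x = x := by
  obtain ⟨c, hc⟩ := exists_slope_monoidHom hPL hmono hone hmul hs hfix
  have hc_one := c.eq_one_of_pos_s10 hH1 fun g => (hc g).1
  have hid g : ∀ᶠ x in 𝓝[≥] s, ρ g x = x :=
    (hc g).2.mono fun x hx => by rw [hx, hc_one, one_mul, add_sub_cancel]
  obtain ⟨S, hS, hSfin⟩ := Group.fg_iff.1 ‹Group.FG G›
  have hSid : ∀ᶠ x in 𝓝[>] s, ∀ g ∈ S, ρ g x = x :=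
    (hSfin.eventually_all.2 fun g _ => hid g).filter_mono (nhdsWithin_mono s Ioi_subset_Ici_self)
  filter_upwards [hSid, Ioc_mem_nhdsGT hs.2] with x hSx hx
  exact apply_eq_of_closure_eq_top hone hmul hS ⟨hs.1.trans hx.1.le, hx.2⟩ hSx

end Action

/-- PL Reeb–Thurston stability on the closed interval: if a finitely generated group
`G` with no nontrivial homomorphism to `ℝ` acts on `[0,1]` by PL homeomorphisms fixing
both endpoints `0` and `1`, then every element acts as the identity on `[0,1]`. -/
theorem pl_action_on_Icc_trivial (G : Type*) [Group G] [Group.FG G]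
    (hH1 : ∀ φ : G →* Multiplicative ℝ, ∀ g : G, φ g = 1)
    (ρ : G → ℝ → ℝ)
    (hPL : ∀ g : G, IsPLHomeoIcc (ρ g))
    (hfix0 : ∀ g : G, ρ g 0 = 0)
    (hfix1 : ∀ g : G, ρ g 1 = 1)
    (hone : ∀ x ∈ Icc (0:ℝ) 1, ρ 1 x = x)
    (hmul : ∀ g h : G, ∀ x ∈ Icc (0:ℝ) 1, ρ (g * h) x = ρ g (ρ h x)) :
    ∀ g : G, ∀ x ∈ Icc (0:ℝ) 1, ρ g x = x := by
  have hmono g : StrictMonoOn (ρ g) (Icc 0 1) :=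
    (hPL g).strictMonoOn (by rw [hfix0, hfix1]; exact zero_le_one)
  have hclosed : IsClosed ({x | ∀ g, ρ g x = x} ∩ Icc 0 1) :=
    isClosed_setOf_forall_apply_eq_inter isClosed_Icc fun g => (hPL g).2.1
  have hfixed : Icc 0 1 ⊆ {x | ∀ g, ρ g x = x} :=
    hclosed.Icc_subset_of_forall_mem_nhdsWithin hfix0 fun s hs =>
      eventually_nhdsGT_forall_apply_eq hH1 (fun g => (hPL g).2.2.2) hmono hone hmul hs.2 hs.1
  exact fun g x hx => hfixed hx g
end

section
/- Let G be a finitely generated group such that every group homomorphism from G to the additive group ℝ is trivial. Suppose G acts on ℝ by PL homeomorphisms such that every element of G fixes 0 and maps the positive half-line (0,∞) onto itself (i.e., the action is orientation-preserving). Then the action is trivial: every element of G acts as the identity on ℝ. (This is the one-dimensional case of the PL Reeb–Thurston stability theorem: fixing 0 and preserving the two rays at 0 means G acts trivially on the tangent sphere at the fixed point.) -/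
open Set

/-- `f : ℝ → ℝ` is piecewise linear: there are points `t₀ < t₁ < ⋯ < tₙ` such that
`f` is affine on `(-∞, t₀]`, on each `[tᵢ, tᵢ₊₁]`, and on `[tₙ, ∞)`. -/
def IsPLReal (f : ℝ → ℝ) : Prop :=
  ∃ (n : ℕ) (t a b : ℕ → ℝ),
    (∀ i < n, t i < t (i + 1)) ∧
    (∀ x ≤ t 0, f x = a 0 * x + b 0) ∧
    (∀ i < n, ∀ x ∈ Icc (t i) (t (i + 1)), f x = a (i + 1) * x + b (i + 1)) ∧
    (∀ x, t n ≤ x → f x = a (n + 1) * x + b (n + 1))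

/-- A PL homeomorphism of `ℝ`: a homeomorphism of `ℝ` which is piecewise linear. -/
def IsPLHomeoReal (f : ℝ → ℝ) : Prop :=
  Function.Bijective f ∧ Continuous f ∧
  (∃ g : ℝ → ℝ, Function.LeftInverse g f ∧ Function.RightInverse g f ∧ Continuous g) ∧
  IsPLReal f


/-!
At a point `c` fixed by all of `G`, each `ρ g` is affine on some `[c, c + ε]` (being PL) with
positive slope, and by the chain rule `g ↦ log (ρ g)'(c⁺)` is a homomorphism `G → ℝ`, hence
trivial: every `ρ g` is the identity just to the right of `c`. As `G` is finitely generated,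
the whole group then fixes a common interval `[c, c + ε]`. So the common fixed-point set is closed,
contains `0` and is open to the right, hence contains `[0, ∞)`; conjugating the action by
`x ↦ -x` handles `(-∞, 0]`.
-/

open Filter Topology

theorem Nat.exists_lt_and_not_succ_of_not {P : ℕ → Prop} {n : ℕ} (h0 : P 0) (hn : ¬P n) :
    ∃ i < n, P i ∧ ¬P (i + 1) := by
  induction n with
  | zero => exact absurd h0 hn
  | succ n ih =>
    by_cases h : P n
    · exact ⟨n, n.lt_succ_self, h, hn⟩
    · obtain ⟨i, hi, hPi⟩ := ih h
      exact ⟨i, hi.trans n.lt_succ_self, hPi⟩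

def HasAffineRightGerms (f : ℝ → ℝ) : Prop :=
  ∀ c : ℝ, ∃ a b : ℝ, ∀ᶠ x in 𝓝[≥] c, f x = a * x + b

namespace IsPLReal

variable {f : ℝ → ℝ}

theorem hasAffineRightGerms (hf : IsPLReal f) : HasAffineRightGerms f := fun c => by
  obtain ⟨n, t, a, b, -, hleft, hmid, hright⟩ := hf
  rcases lt_or_ge c (t 0) with h0 | h0
  · exact ⟨a 0, b 0, eventually_of_mem (Ico_mem_nhdsGE h0) fun x hx => hleft x hx.2.le⟩
  rcases le_or_gt (t n) c with hn | hn
  · exact ⟨a (n + 1), b (n + 1),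
      eventually_of_mem self_mem_nhdsWithin fun x hx => hright x (hn.trans hx)⟩
  obtain ⟨i, hi, hti, hct⟩ :=
    Nat.exists_lt_and_not_succ_of_not (P := fun i => t i ≤ c) h0 hn.not_ge
  exact ⟨a (i + 1), b (i + 1), eventually_of_mem (Ico_mem_nhdsGE (not_le.1 hct))
    fun x hx => hmid i hi x ⟨hti.trans hx.1, hx.2.le⟩⟩

theorem exists_eventually_affine_nhdsLE (hf : IsPLReal f) (c : ℝ) :
    ∃ a b : ℝ, ∀ᶠ x in 𝓝[≤] c, f x = a * x + b := by
  obtain ⟨n, t, a, b, -, hleft, hmid, hright⟩ := hf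
  rcases le_or_gt c (t 0) with h0 | h0
  · exact ⟨a 0, b 0, eventually_of_mem self_mem_nhdsWithin fun x hx => hleft x (hx.trans h0)⟩
  rcases lt_or_ge (t n) c with hn | hn
  · exact ⟨a (n + 1), b (n + 1),
      eventually_of_mem (Ioc_mem_nhdsLE hn) fun x hx => hright x hx.1.le⟩
  obtain ⟨i, hi, hti, hct⟩ :=
    Nat.exists_lt_and_not_succ_of_not (P := fun i => t i < c) h0 hn.not_gt
  exact ⟨a (i + 1), b (i + 1), eventually_of_mem (Ioc_mem_nhdsLE hti)
    fun x hx => hmid i hi x ⟨hx.1.le, hx.2.trans (not_lt.1 hct)⟩⟩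

theorem hasAffineRightGerms_neg_comp_neg (hf : IsPLReal f) :
    HasAffineRightGerms fun x => -f (-x) := fun c => by
  obtain ⟨a, b, h⟩ := hf.exists_eventually_affine_nhdsLE (-c)
  have hneg : Tendsto Neg.neg (𝓝[≥] c) (𝓝[≤] (-c)) := by
    simpa using tendsto_neg_nhdsGE_neg (a := -c)
  exact ⟨a, -b, (hneg.eventually h).mono fun x hx => by simp only [hx]; ring⟩

end IsPLReal

theorem StrictMono.exists_pos_slope_nhdsGE {f : ℝ → ℝ} {c : ℝ} (hmono : StrictMono f)
    (hc : f c = c) (hgerm : ∃ a b : ℝ, ∀ᶠ x in 𝓝[≥] c, f x = a * x + b) :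
    ∃ s > 0, ∀ᶠ x in 𝓝[≥] c, f x = c + s * (x - c) := by
  obtain ⟨a, b, h⟩ := hgerm
  have hab : a * c + b = c := by
    rw [← h.self_of_nhdsWithin self_mem_Ici, hc]
  have h' : ∀ᶠ x in 𝓝[≥] c, f x = c + a * (x - c) :=
    h.mono fun x hx => by linear_combination hx + hab
  obtain ⟨x, hx, hcx⟩ :=
    ((h'.filter_mono (nhdsWithin_mono _ Ioi_subset_Ici_self)).and self_mem_nhdsWithin).exists
  have hslope : 0 < a * (x - c) := by linarith [hx ▸ hc ▸ hmono hcx]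
  exact ⟨a, pos_of_mul_pos_left hslope (sub_nonneg.2 (le_of_lt hcx)), h'⟩

theorem Continuous.strictMono_of_inj_of_lt {f : ℝ → ℝ} (hcont : Continuous f)
    (hinj : Function.Injective f) {a b : ℝ} (hab : a < b) (h : f a < f b) : StrictMono f :=
  (hcont.strictMono_of_inj hinj).resolve_right fun hanti => lt_asymm h (hanti hab)

theorem eventually_forall_apply_eq_self {G α : Type*} [Group G] [Group.FG G]
    (ρ : G →* Equiv.Perm α) {l : Filter α} (h : ∀ g, ∀ᶠ x in l, ρ g x = x) :
    ∀ᶠ x in l, ∀ g, ρ g x = x := by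
  obtain ⟨S, hS⟩ := Group.FG.out (G := G)
  filter_upwards [(S.eventually_all).2 fun g _ => h g] with x hx g
  have : Subgroup.closure (S : Set G) ≤ (MulAction.stabilizer (Equiv.Perm α) x).comap ρ :=
    (Subgroup.closure_le _).2 hx
  exact (hS ▸ this) (Subgroup.mem_top g)

section RightSlope

variable {G : Type*} [Group G] (ρ : G →* Equiv.Perm ℝ)
  (hH1 : ∀ φ : G →* Multiplicative ℝ, ∀ g : G, φ g = 1)
  (hmono : ∀ g, StrictMono (ρ g)) (hgerm : ∀ g, HasAffineRightGerms (ρ g))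
include hH1 hmono hgerm

theorem eventually_apply_eq_self_nhdsGE {c : ℝ} (hc : ∀ g, ρ g c = c) (g : G) :
    ∀ᶠ x in 𝓝[≥] c, ρ g x = x := by
  choose s hs_pos hs using fun g => (hmono g).exists_pos_slope_nhdsGE (hc g) (hgerm g c)
  have hderiv : ∀ g, HasDerivWithinAt (ρ g) (s g) (Ici c) c := fun g => by
    simpa using (((hasDerivAt_id c).sub_const c).const_mul (s g) |>.const_add c).hasDerivWithinAt
      |>.congr_of_eventuallyEq (hs g) (by simp [hc])
  have hs_mul : ∀ g h, s (g * h) = s g * s h := fun g h => by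
    have hmaps : MapsTo (ρ h) (Ici c) (Ici c) := fun x hx => hc h ▸ (hmono h).monotone hx
    refine (uniqueDiffWithinAt_Ici c).eq_deriv _ (hderiv (g * h)) ?_
    simpa using (hderiv g).comp_of_eq c (hderiv h) hmaps (hc h).symm
  let φ : G →* Multiplicative ℝ :=
    MonoidHom.mk' (fun g => .ofAdd (Real.log (s g))) fun g h => by
      rw [hs_mul, Real.log_mul (hs_pos g).ne' (hs_pos h).ne']
      rfl
  have hs_one : s g = 1 :=
    Real.eq_one_of_pos_of_log_eq_zero (hs_pos g) (congrArg Multiplicative.toAdd (hH1 φ g))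
  simpa [hs_one] using hs g

theorem apply_eq_self_of_nonneg [Group.FG G] (h0 : ∀ g, ρ g 0 = 0) (g : G) {x : ℝ}
    (hx : 0 ≤ x) : ρ g x = x := by
  set F := {y : ℝ | ∀ g, ρ g y = y}
  have hF : IsClosed F := by
    simp only [F, ofPred_forall]
    exact isClosed_iInter fun g =>
      isClosed_eq ((hmono g).monotone.continuous_of_surjective (ρ g).surjective) continuous_id
  have hstep : ∀ y ∈ F, F ∈ 𝓝[>] y := fun y hy =>
    nhdsWithin_mono _ Ioi_subset_Ici_self <| eventually_forall_apply_eq_self ρ <|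
      eventually_apply_eq_self_nhdsGE ρ hH1 hmono hgerm hy
  exact (hF.inter isClosed_Icc).Icc_subset_of_forall_mem_nhdsWithin h0
    (fun y hy => hstep y hy.1) ⟨hx, le_rfl⟩ g

end RightSlope

/-- One-dimensional PL Reeb–Thurston stability: if a finitely generated group `G` with
no nontrivial homomorphism to `ℝ` acts on `ℝ` by PL homeomorphisms, each fixing `0` and
mapping the positive half-line `(0, ∞)` onto itself, then the action is trivial. -/
theorem pl_action_on_real_trivial (G : Type*) [Group G] [Group.FG G]
    (hH1 : ∀ φ : G →* Multiplicative ℝ, ∀ g : G, φ g = 1)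
    (ρ : G → ℝ → ℝ)
    (hPL : ∀ g : G, IsPLHomeoReal (ρ g))
    (hfix : ∀ g : G, ρ g 0 = 0)
    (hpos : ∀ g : G, ρ g '' Ioi (0:ℝ) = Ioi (0:ℝ))
    (hone : ∀ x : ℝ, ρ 1 x = x)
    (hmul : ∀ g h : G, ∀ x : ℝ, ρ (g * h) x = ρ g (ρ h x)) :
    ∀ g : G, ∀ x : ℝ, ρ g x = x := by
  let σ : G →* Equiv.Perm ℝ :=
    { toFun g := Equiv.ofBijective (ρ g) (hPL g).1
      map_one' := Equiv.ext hone
      map_mul' g h := Equiv.ext (hmul g h) }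
  have hmono : ∀ g, StrictMono (ρ g) := fun g => by
    have h1 : ρ g 1 ∈ Ioi 0 := hpos g ▸ mem_image_of_mem _ (mem_Ioi.2 one_pos)
    exact (hPL g).2.1.strictMono_of_inj_of_lt (hPL g).1.1 one_pos (by rwa [hfix g])
  let τ := (MulAut.conj (Equiv.neg ℝ)).toMonoidHom.comp σ
  have hτ : ∀ g, ⇑(τ g) = fun x => -ρ g (-x) := fun g => by
    ext x
    simp [τ, σ, MulAut.conj_apply]
  have hmono_τ : ∀ g, StrictMono (τ g) := fun g => by
    rw [hτ]
    exact fun x y hxy => neg_lt_neg (hmono g (neg_lt_neg hxy))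
  have hgerm_τ : ∀ g, HasAffineRightGerms (τ g) := fun g => by
    rw [hτ]
    exact (hPL g).2.2.2.hasAffineRightGerms_neg_comp_neg
  intro g x
  rcases le_total 0 x with hx | hx
  · exact apply_eq_self_of_nonneg σ hH1 hmono (fun g => (hPL g).2.2.2.hasAffineRightGerms) hfix
      g hx
  · simpa [hτ] using
      apply_eq_self_of_nonneg τ hH1 hmono_τ hgerm_τ (by simp [hτ, hfix]) g (neg_nonneg.2 hx)
end

section
/- Let G be a finitely generated group such that every group homomorphism from G to the additive group ℝ is trivial. Suppose G acts on ℝ by orientation-preserving PL homeomorphisms, each of which commutes with the translation x ↦ x + 1 and fixes 0. Then every element of G acts as the identity on ℝ. (This expresses triviality of a PL action on the circle ℝ/ℤ with a global fixed point, for a group with H₁(G;ℝ) = 0, via lifts to ℝ.) -/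
/-!
The set `F` of common fixed points is closed and contains `ℤ`. At `u ∈ F` every `ρ g` is, just
to the right of `u`, a dilation centred at `u` whose ratio `c g > 0` is multiplicative in `g`,
so `log ∘ c` is a homomorphism to `ℝ` and hence trivial: each `ρ g` is the identity on some
`[u, u + δ_g]`. Finite generation gives a common `δ`, so `F` contains a right neighbourhood of
each of its points, and continuous induction from `⌊x⌋` yields `x ∈ F`.
-/

open Set

open Filter Topology

theorem exists_mem_Ico_of_le_of_lt {α : Type*} [LinearOrder α] (t : ℕ → α) {u : α} :
    ∀ {n : ℕ}, t 0 ≤ u → u < t n → ∃ i < n, u ∈ Ico (t i) (t (i + 1))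
  | 0, h0, hn => absurd hn (not_lt.2 h0)
  | n + 1, h0, hn => by
    by_cases hu : u < t n
    · obtain ⟨i, hi, hmem⟩ := exists_mem_Ico_of_le_of_lt t h0 hu
      exact ⟨i, by omega, hmem⟩
    · exact ⟨n, n.lt_succ_self, not_lt.1 hu, hn⟩

theorem IsPLReal.exists_eventuallyEq_affine_nhdsGE {f : ℝ → ℝ} (hf : IsPLReal f) (u : ℝ) :
    ∃ a b : ℝ, f =ᶠ[𝓝[≥] u] fun y => a * y + b := by
  obtain ⟨n, t, a, b, -, hleft, hmid, hright⟩ := hf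
  by_cases hn : t n ≤ u
  · exact ⟨a (n + 1), b (n + 1),
      eventually_nhdsWithin_of_forall fun y hy => hright y (hn.trans hy)⟩
  by_cases h0 : u < t 0
  · exact ⟨a 0, b 0, mem_nhdsWithin_of_mem_nhds <| mem_of_superset (Iic_mem_nhds h0) hleft⟩
  obtain ⟨i, hi, hui, hut⟩ := exists_mem_Ico_of_le_of_lt t (not_lt.1 h0) (not_le.1 hn)
  exact ⟨a (i + 1), b (i + 1), mem_of_superset (Ico_mem_nhdsGE hut) fun y hy =>
    hmid i hi y ⟨hui.trans hy.1, hy.2.le⟩⟩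

def HasRightSlopeAt (f : ℝ → ℝ) (u c : ℝ) : Prop :=
  f =ᶠ[𝓝[≥] u] fun y => u + c * (y - u)

theorem IsPLReal.exists_hasRightSlopeAt {f : ℝ → ℝ} (hf : IsPLReal f) (hmono : StrictMono f)
    {u : ℝ} (hu : f u = u) : ∃ c, 0 < c ∧ HasRightSlopeAt f u c := by
  obtain ⟨a, b, hab⟩ := hf.exists_eventuallyEq_affine_nhdsGE u
  have hbu : b = u - a * u := by linarith [hu ▸ hab.eq_of_nhdsWithin self_mem_Ici]
  have hslope : HasRightSlopeAt f u a := hab.mono fun y hy => by rw [hy, hbu]; ring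
  obtain ⟨y, hy, hyu⟩ := ((hslope.filter_mono (nhdsWithin_mono u Ioi_subset_Ici_self)).and
    self_mem_nhdsWithin).exists
  have hlt : u < u + a * (y - u) := by simpa only [hu, hy] using hmono hyu
  exact ⟨a, pos_of_mul_pos_left (by linarith) (sub_pos.2 hyu).le, hslope⟩

namespace HasRightSlopeAt

variable {f g : ℝ → ℝ} {u c d : ℝ}

theorem unique (hc : HasRightSlopeAt f u c) (hd : HasRightSlopeAt f u d) : c = d := by
  obtain ⟨y, hy, hyu⟩ :=
    (((hc.symm.trans hd).filter_mono (nhdsWithin_mono u Ioi_subset_Ici_self)).and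
      self_mem_nhdsWithin).exists
  exact mul_right_cancel₀ (sub_pos.2 hyu).ne' (add_left_cancel hy)

theorem tendsto (hg : HasRightSlopeAt g u d) (hd : 0 < d) : Tendsto g (𝓝[≥] u) (𝓝[≥] u) := by
  refine Tendsto.congr' hg.symm (tendsto_nhdsWithin_of_tendsto_nhds_of_eventually_within _ ?_
    (eventually_nhdsWithin_of_forall fun y hy => ?_))
  · exact ((by fun_prop : Continuous fun y : ℝ => u + d * (y - u)).tendsto' u u (by ring)).mono_left
      nhdsWithin_le_nhds
  · simpa using mul_nonneg hd.le (sub_nonneg.2 hy)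

theorem comp (hf : HasRightSlopeAt f u c) (hg : HasRightSlopeAt g u d) (hd : 0 < d) :
    HasRightSlopeAt (f ∘ g) u (c * d) :=
  ((hf.comp_tendsto (hg.tendsto hd)).trans (hg.fun_comp _)).mono fun y hy => by
    simp only [Function.comp_apply] at hy ⊢
    rw [hy]; ring

end HasRightSlopeAt

theorem Group.FG.eventually_forall_smul_eq {G α : Type*} [Group G] [Group.FG G] [MulAction G α]
    {l : Filter α} (h : ∀ g : G, ∀ᶠ x in l, g • x = x) : ∀ᶠ x in l, ∀ g : G, g • x = x := by
  obtain ⟨T, hT⟩ := Group.FG.out (G := G)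
  filter_upwards [(eventually_all_finset T).2 fun g _ => h g] with x hx g
  have : Subgroup.closure (T : Set G) ≤ MulAction.stabilizer G x := (Subgroup.closure_le _).2 hx
  exact this (hT ▸ Subgroup.mem_top g)

section RightSlope

variable {G : Type*} [Group G] [MulAction G ℝ] {u : ℝ} {c : G → ℝ}

theorem map_mul_of_hasRightSlopeAt (hc : ∀ g, 0 < c g)
    (hslope : ∀ g : G, HasRightSlopeAt (g • ·) u (c g)) (g h : G) : c (g * h) = c g * c h :=
  (hslope (g * h)).unique <| by
    convert (hslope g).comp (hslope h) (hc h) using 1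
    exact funext (mul_smul g h)

theorem eventually_smul_eq_of_hasRightSlopeAt
    (hH1 : ∀ φ : G →* Multiplicative ℝ, ∀ g : G, φ g = 1) (hc : ∀ g, 0 < c g)
    (hslope : ∀ g : G, HasRightSlopeAt (g • ·) u (c g)) (g : G) : ∀ᶠ x in 𝓝[≥] u, g • x = x := by
  let logSlope : G →* Multiplicative ℝ :=
    MonoidHom.mk' (fun g => Multiplicative.ofAdd (Real.log (c g))) fun g h => by
      rw [map_mul_of_hasRightSlopeAt hc hslope, Real.log_mul (hc g).ne' (hc h).ne', ofAdd_add]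
  have hc1 : c g = 1 :=
    Real.eq_one_of_pos_of_log_eq_zero (hc g) (congrArg Multiplicative.toAdd (hH1 logSlope g))
  filter_upwards [hslope g] with x hx
  rw [hx, hc1]
  ring

end RightSlope

/-- Triviality of a PL circle action with a global fixed point, via lifts: if a finitely
generated group `G` with no nontrivial homomorphism to `ℝ` acts on `ℝ` by
orientation-preserving (strictly increasing) PL homeomorphisms, each commuting with the
translation `x ↦ x + 1` and fixing `0`, then every element acts as the identity. -/
theorem pl_circle_action_with_fixed_point_trivial (G : Type*) [Group G] [Group.FG G]
    (hH1 : ∀ φ : G →* Multiplicative ℝ, ∀ g : G, φ g = 1)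
    (ρ : G → ℝ → ℝ)
    (hPL : ∀ g : G, IsPLHomeoReal (ρ g))
    (hmono : ∀ g : G, StrictMono (ρ g))
    (hcomm : ∀ g : G, ∀ x : ℝ, ρ g (x + 1) = ρ g x + 1)
    (hfix : ∀ g : G, ρ g 0 = 0)
    (hone : ∀ x : ℝ, ρ 1 x = x)
    (hmul : ∀ g h : G, ∀ x : ℝ, ρ (g * h) x = ρ g (ρ h x)) :
    ∀ g : G, ∀ x : ℝ, ρ g x = x := by
  let _ : MulAction G ℝ := { smul := ρ, one_smul := hone, mul_smul := hmul }
  set F : Set ℝ := {y | ∀ g : G, ρ g y = y}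
  have hF_closed : IsClosed F := by
    simp only [F, ofPred_forall]
    exact isClosed_iInter fun g => isClosed_eq (hPL g).2.1 continuous_id
  have hF_int (m : ℤ) : (m : ℝ) ∈ F := fun g => by
    simpa [hfix g] using CircleDeg1Lift.map_int_of_map_zero ⟨⟨ρ g, (hmono g).monotone⟩, hcomm g⟩ m
  have hF_nhds (u : ℝ) (hu : u ∈ F) : F ∈ 𝓝[>] u := by
    choose c hc hslope using fun g => (hPL g).2.2.2.exists_hasRightSlopeAt (hmono g) (hu g)
    exact nhdsWithin_mono u Ioi_subset_Ici_self <|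
      Group.FG.eventually_forall_smul_eq (eventually_smul_eq_of_hasRightSlopeAt hH1 hc hslope)
  intro g x
  exact (hF_closed.inter isClosed_Icc).Icc_subset_of_forall_mem_nhdsWithin (hF_int ⌊x⌋)
    (fun u hu => hF_nhds u hu.1) ⟨Int.floor_le x, le_rfl⟩ g
end
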